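/- For any finite set of observations x_1,...,x_n on the unit sphere S^{d-1} and any number p ≥ 2 of mixture components, the likelihood function of a p-component mixture of von Mises-Fisher distributions is unbounded: there exists a sequence of parameters (mean directions, concentration parameters, mixing weights) along which the likelihood tends to infinity. -/

import Mathlib

/-!
Put weight `1/2` on each of two components centred at one observation `x₀`, one with
concentration `κ → ∞` and one with a fixed concentration. The fixed component bounds every factor
of the likelihood below by a positive constant, while the factor at `x₀` is at least
`c_d(κ) e^κ / 2`. This tends to infinity: `Γ(m + ν + 1) ≥ m! Γ(ν + 1)` gives
`I_ν(z) ≤ (z/2)^ν / Γ(ν + 1) · Σ_m (a^m / m!)^2` with `a = z/2`, and that sum is at most `e^a` times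
the largest term of the exponential series, which sits at `m = ⌊a⌋` and is at most `e^a / √(π a)`
by Stirling. Hence `c_d(κ) e^κ ≥ c √κ`.
-/

open scoped RealInnerProductSpace BigOperators ENNReal NNReal Classical
open MeasureTheory Filter Real ProbabilityTheory Asymptotics

/-- Modified Bessel function of the first kind of order `r`. -/
noncomputable def besselI (r z : ℝ) : ℝ :=
  ∑' m : ℕ, (z / 2) ^ (2 * (m : ℝ) + r) / ((Nat.factorial m) * Real.Gamma ((m : ℝ) + r + 1))

/-- Normalizing constant of the `d`-dimensional von Mises-Fisher density. -/
noncomputable def vmfConst (d : ℕ) (κ : ℝ) : ℝ :=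
  κ ^ ((d : ℝ) / 2 - 1) / ((2 * Real.pi) ^ ((d : ℝ) / 2) * besselI ((d : ℝ) / 2 - 1) κ)

/-- von Mises-Fisher density with mean direction `μ` and concentration `κ`. -/
noncomputable def vmfDensity (d : ℕ) (μ x : EuclideanSpace ℝ (Fin d)) (κ : ℝ) : ℝ :=
  vmfConst d κ * Real.exp (κ * ⟪μ, x⟫)

/-- The unit sphere `S^{d-1}` in `ℝ^d`. -/
abbrev Sph (d : ℕ) := Metric.sphere (0 : EuclideanSpace ℝ (Fin d)) 1

/-- Open geodesic ball of radius `r` centered at `μ` on the unit sphere. -/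
noncomputable def gBall {d : ℕ} (μ : Sph d) (r : ℝ) : Set (Sph d) :=
  {y | Real.arccos ⟪(μ : EuclideanSpace ℝ (Fin d)), (y : EuclideanSpace ℝ (Fin d))⟫ < r}

/-- Surface measure on the unit sphere, realized as `(d-1)`-dimensional Hausdorff measure. -/
noncomputable def sphMeasure (d : ℕ) : Measure (Sph d) := μH[(d : ℝ) - 1]

/-- The constant `A₂ = 2^{d-1} · 2π^{(d-1)/2} / Γ((d-1)/2)`. -/
noncomputable def A2val (d : ℕ) : ℝ :=
  2 ^ (d - 1) * (2 * Real.pi ^ (((d : ℝ) - 1) / 2) / Real.Gamma (((d : ℝ) - 1) / 2))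

open Nat in
lemma pow_div_factorial_le_pow_div_factorial_of_le_of_le {a : ℝ} {N : ℕ} (hNa : (N : ℝ) ≤ a)
    (haN : a ≤ N + 1) (m : ℕ) : a ^ m / m ! ≤ a ^ N / N ! := by
  have ha : 0 ≤ a := (Nat.cast_nonneg N).trans hNa
  rw [div_le_div_iff₀ (by positivity) (by positivity)]
  rcases le_total m N with hmN | hNm
  · obtain ⟨k, rfl⟩ := Nat.exists_eq_add_of_le hmN
    have hfac : ((m + k)! : ℝ) ≤ m ! * a ^ k := by
      calc ((m + k)! : ℝ) = m ! * (m + 1).ascFactorial k := by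
            exact_mod_cast (factorial_mul_ascFactorial m k).symm
        _ ≤ m ! * ((m + k : ℕ) : ℝ) ^ k := by
            gcongr; exact_mod_cast ascFactorial_le_pow_add m k
        _ ≤ m ! * a ^ k := by gcongr
    calc a ^ m * (m + k)! ≤ a ^ m * (m ! * a ^ k) := by gcongr
      _ = a ^ (m + k) * m ! := by ring
  · obtain ⟨k, rfl⟩ := Nat.exists_eq_add_of_le hNm
    have hfac : (N ! : ℝ) * a ^ k ≤ (N + k)! := by
      calc (N ! : ℝ) * a ^ k ≤ N ! * ((N : ℝ) + 1) ^ k := by gcongr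
        _ ≤ (N + k)! := by exact_mod_cast factorial_mul_pow_le_factorial
    calc a ^ (N + k) * N ! = a ^ N * (N ! * a ^ k) := by ring
      _ ≤ a ^ N * (N + k)! := by gcongr

open Nat in
lemma pow_div_factorial_le_exp_div_sqrt {a : ℝ} (ha : 0 ≤ a) {m : ℕ} (hm : m ≠ 0) :
    a ^ m / m ! ≤ exp a / √(2 * π * m) := by
  have hm0 : (0 : ℝ) < m := by positivity
  have hpow : a ^ m ≤ exp a * (m / exp 1) ^ m := by
    have hratio : a / m ≤ exp (a / m - 1) := by linarith [add_one_le_exp (a / m - 1)]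
    calc a ^ m = (a / m) ^ m * (m : ℝ) ^ m := by rw [← mul_pow, div_mul_cancel₀ _ hm0.ne']
      _ ≤ exp (a / m - 1) ^ m * (m : ℝ) ^ m := by gcongr
      _ = exp a * (m / exp 1) ^ m := by
          rw [← exp_nat_mul, div_pow, ← exp_nat_mul, mul_sub, mul_div_cancel₀ _ hm0.ne', exp_sub]
          ring
  rw [div_le_div_iff₀ (by positivity) (by positivity)]
  calc a ^ m * √(2 * π * m) ≤ exp a * (√(2 * π * m) * (m / exp 1) ^ m) := by
        nlinarith [sqrt_nonneg (2 * π * m)]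
    _ ≤ exp a * m ! := by gcongr; exact Stirling.le_factorial_stirling m

open Nat in
lemma pow_div_factorial_le_exp_div_sqrt_pi_mul {a : ℝ} (ha : 1 ≤ a) (m : ℕ) :
    a ^ m / m ! ≤ exp a / √(π * a) := by
  have hfloor : 1 ≤ ⌊a⌋₊ := Nat.le_floor (by simpa using ha)
  have hfloor_le : (⌊a⌋₊ : ℝ) ≤ a := Nat.floor_le (by linarith)
  have hlt_floor : a < ⌊a⌋₊ + 1 := Nat.lt_floor_add_one a
  have hfloor_ge : (1 : ℝ) ≤ ⌊a⌋₊ := by exact_mod_cast hfloor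
  calc a ^ m / m ! ≤ a ^ ⌊a⌋₊ / (⌊a⌋₊)! :=
        pow_div_factorial_le_pow_div_factorial_of_le_of_le hfloor_le hlt_floor.le m
    _ ≤ exp a / √(2 * π * ⌊a⌋₊) := pow_div_factorial_le_exp_div_sqrt (by linarith) (by omega)
    _ ≤ exp a / √(π * a) := by
        refine div_le_div_of_nonneg_left (exp_pos a).le (by positivity) (sqrt_le_sqrt ?_)
        nlinarith [pi_pos]

open Nat in
lemma factorial_mul_Gamma_le_Gamma_nat_add {ν : ℝ} (hν : 0 ≤ ν) (m : ℕ) :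
    m ! * Gamma (ν + 1) ≤ Gamma (m + ν + 1) := by
  induction m with
  | zero => simp
  | succ k ih =>
    have hpos : (0 : ℝ) < k + ν + 1 := by positivity
    rw [factorial_succ, Nat.cast_mul, Nat.cast_succ,
      show (k + 1 : ℝ) + ν + 1 = (k + ν + 1) + 1 by ring, Gamma_add_one hpos.ne', mul_assoc]
    have hΓ : 0 ≤ Gamma (k + ν + 1) := (Gamma_pos_of_pos hpos).le
    calc ((k : ℝ) + 1) * (k ! * Gamma (ν + 1)) ≤ ((k : ℝ) + 1) * Gamma (k + ν + 1) := by gcongr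
      _ ≤ (k + ν + 1) * Gamma (k + ν + 1) := by gcongr; linarith

noncomputable def besselITerm (r z : ℝ) (m : ℕ) : ℝ :=
  (z / 2) ^ (2 * (m : ℝ) + r) / ((Nat.factorial m) * Real.Gamma ((m : ℝ) + r + 1))

section Bessel

variable {r z : ℝ}

lemma besselITerm_nonneg (hr : -1 ≤ r) (hz : 0 ≤ z) (m : ℕ) : 0 ≤ besselITerm r z m :=
  div_nonneg (rpow_nonneg (by linarith) _)
    (mul_nonneg (Nat.cast_nonneg _) (Gamma_nonneg_of_nonneg (by linarith [m.cast_nonneg (α := ℝ)])))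

open Nat in
lemma besselITerm_le (hr : 0 ≤ r) (hz : 0 ≤ z) (m : ℕ) :
    besselITerm r z m ≤ (z / 2) ^ r / Gamma (r + 1) * ((z / 2) ^ m / m !) ^ 2 := by
  have hz2 : 0 ≤ z / 2 := by positivity
  have hΓ : 0 < Gamma (r + 1) := Gamma_pos_of_pos (by positivity)
  have hsplit : (z / 2) ^ (2 * (m : ℝ) + r) = ((z / 2) ^ m) ^ 2 * (z / 2) ^ r := by
    rw [rpow_add_of_nonneg hz2 (by positivity : (0 : ℝ) ≤ 2 * m) hr, mul_comm (2 : ℝ),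
      rpow_mul hz2, rpow_natCast, rpow_two]
  calc besselITerm r z m
      ≤ ((z / 2) ^ m) ^ 2 * (z / 2) ^ r / (m ! * (m ! * Gamma (r + 1))) := by
        rw [besselITerm, hsplit]
        gcongr
        exact factorial_mul_Gamma_le_Gamma_nat_add hr m
    _ = (z / 2) ^ r / Gamma (r + 1) * ((z / 2) ^ m / m !) ^ 2 := by
        have := hΓ.ne'
        field_simp

lemma summable_besselITerm (hr : 0 ≤ r) (hz : 0 ≤ z) : Summable (besselITerm r z) := by
  refine .of_nonneg_of_le (besselITerm_nonneg (by linarith) hz) (besselITerm_le hr hz) ?_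
  refine .mul_left _ (.of_nonneg_of_le (fun m => by positivity) (fun m => ?_)
    ((Real.summable_pow_div_factorial (z / 2)).mul_left (exp (z / 2))))
  rw [sq]
  exact mul_le_mul_of_nonneg_right (pow_div_factorial_le_exp _ (by positivity) m) (by positivity)

lemma besselI_nonneg (hr : -1 ≤ r) (hz : 0 ≤ z) : 0 ≤ besselI r z :=
  tsum_nonneg (besselITerm_nonneg hr hz)

lemma besselI_pos (hr : 0 ≤ r) (hz : 0 < z) : 0 < besselI r z := by
  refine (summable_besselITerm hr hz.le).tsum_pos (besselITerm_nonneg (by linarith) hz.le) 0 ?_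
  have : 0 < Gamma (r + 1) := Gamma_pos_of_pos (by positivity)
  simp only [besselITerm, Nat.cast_zero, mul_zero, zero_add, Nat.factorial_zero, Nat.cast_one,
    one_mul]
  positivity

lemma besselI_le (hr : 0 ≤ r) (hz : 2 ≤ z) :
    besselI r z ≤ (z / 2) ^ r / Gamma (r + 1) * (exp z / √(π * (z / 2))) := by
  set C := (z / 2) ^ r / Gamma (r + 1)
  set M := exp (z / 2) / √(π * (z / 2))
  have hC : 0 ≤ C := div_nonneg (rpow_nonneg (by linarith) _) (Gamma_nonneg_of_nonneg (by linarith))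
  refine tsum_le_of_sum_range_le (besselITerm_nonneg (by linarith) (by linarith)) fun n => ?_
  calc ∑ m ∈ Finset.range n, besselITerm r z m
      ≤ ∑ m ∈ Finset.range n, C * M * ((z / 2) ^ m / m.factorial) := by
        refine Finset.sum_le_sum fun m _ => (besselITerm_le hr (by linarith) m).trans ?_
        rw [sq, ← mul_assoc]
        gcongr
        exact pow_div_factorial_le_exp_div_sqrt_pi_mul (a := z / 2) (by linarith) m
    _ ≤ C * M * exp (z / 2) := by
        rw [← Finset.mul_sum]
        gcongr
        exact sum_le_exp_of_nonneg (by linarith) n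
    _ = C * (exp z / √(π * (z / 2))) := by
        rw [show exp z = exp (z / 2) * exp (z / 2) by rw [← exp_add, add_halves]]
        ring

end Bessel

lemma vmfConst_nonneg (d : ℕ) {κ : ℝ} (hκ : 0 ≤ κ) : 0 ≤ vmfConst d κ :=
  div_nonneg (rpow_nonneg hκ _) (mul_nonneg (rpow_nonneg (by positivity) _)
    (besselI_nonneg (by linarith [(d.cast_nonneg : (0 : ℝ) ≤ d)]) hκ))

section Concentration

variable {d : ℕ}

lemma half_dim_sub_one_nonneg (hd : 2 ≤ d) : (0 : ℝ) ≤ (d : ℝ) / 2 - 1 := by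
  have : (2 : ℝ) ≤ d := by exact_mod_cast hd
  linarith

lemma vmfConst_pos (hd : 2 ≤ d) {κ : ℝ} (hκ : 0 < κ) : 0 < vmfConst d κ :=
  div_pos (rpow_pos_of_pos hκ _) (mul_pos (rpow_pos_of_pos (by positivity) _)
    (besselI_pos (half_dim_sub_one_nonneg hd) hκ))

lemma vmfConst_mul_exp_ge (hd : 2 ≤ d) {κ : ℝ} (hκ : 2 ≤ κ) :
    Gamma ((d : ℝ) / 2) / (2 * π) ^ ((d : ℝ) / 2) * √(π * (κ / 2)) ≤ vmfConst d κ * exp κ := by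
  set ν := (d : ℝ) / 2 - 1
  have hν : 0 ≤ ν := half_dim_sub_one_nonneg hd
  have hνd : ν + 1 = (d : ℝ) / 2 := by ring
  have hκ0 : 0 < κ := by linarith
  have hΓ : 0 < Gamma (ν + 1) := Gamma_pos_of_pos (by positivity)
  have hpow : (κ / 2) ^ ν ≤ κ ^ ν := rpow_le_rpow (by positivity) (by linarith) hν
  have := besselI_pos hν hκ0
  have := rpow_pos_of_pos hκ0 ν
  set s := √(π * (κ / 2))
  have hs : 0 < s := sqrt_pos.mpr (by positivity)
  rw [← hνd]
  calc Gamma (ν + 1) / (2 * π) ^ (ν + 1) * s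
      = κ ^ ν * exp κ / ((2 * π) ^ (ν + 1) * (κ ^ ν / Gamma (ν + 1) * (exp κ / s))) := by
        field_simp
    _ ≤ κ ^ ν * exp κ / ((2 * π) ^ (ν + 1) * ((κ / 2) ^ ν / Gamma (ν + 1) * (exp κ / s))) := by
        gcongr
    _ ≤ κ ^ ν * exp κ / ((2 * π) ^ (ν + 1) * besselI ν κ) := by
        gcongr
        exact besselI_le hν hκ
    _ = vmfConst d κ * exp κ := by
        rw [vmfConst, hνd]
        ring

theorem tendsto_vmfConst_mul_exp_atTop (hd : 2 ≤ d) :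
    Tendsto (fun κ => vmfConst d κ * exp κ) atTop atTop := by
  have hc : 0 < Gamma ((d : ℝ) / 2) / (2 * π) ^ ((d : ℝ) / 2) :=
    div_pos (Gamma_pos_of_pos (by linarith [half_dim_sub_one_nonneg hd]))
      (rpow_pos_of_pos (by positivity) _)
  refine tendsto_atTop_mono' atTop ?_ (tendsto_sqrt_atTop.comp
    ((tendsto_id.const_mul_atTop pi_pos).atTop_div_const two_pos) |>.const_mul_atTop hc)
  filter_upwards [eventually_ge_atTop 2] with κ hκ
  simpa [mul_div_assoc] using vmfConst_mul_exp_ge hd hκ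

end Concentration

section Density

variable {d : ℕ} {μ x : EuclideanSpace ℝ (Fin d)} {κ : ℝ}

lemma vmfDensity_nonneg (hκ : 0 ≤ κ) : 0 ≤ vmfDensity d μ x κ :=
  mul_nonneg (vmfConst_nonneg d hκ) (exp_pos _).le

lemma vmfDensity_self (hμ : ‖μ‖ = 1) : vmfDensity d μ μ κ = vmfConst d κ * exp κ := by
  rw [vmfDensity, real_inner_self_eq_norm_sq, hμ, one_pow, mul_one]

lemma vmfConst_mul_exp_neg_le_vmfDensity (hμ : ‖μ‖ = 1) (hx : ‖x‖ = 1) (hκ : 0 ≤ κ) :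
    vmfConst d κ * exp (-κ) ≤ vmfDensity d μ x κ := by
  have hinner : -1 ≤ ⟪μ, x⟫ := by
    have := abs_real_inner_le_norm μ x
    rw [hμ, hx, one_mul] at this
    exact (abs_le.mp this).1
  unfold vmfDensity
  gcongr
  · exact vmfConst_nonneg d hκ
  · nlinarith

end Density

lemma tendsto_prod_atTop_of_forall_le {α ι : Type*} [Fintype ι] {l : Filter α} {f : α → ι → ℝ}
    {c : ℝ} (hc : 0 < c) (hf : ∀ a i, c ≤ f a i) (i₀ : ι) (hi₀ : Tendsto (f · i₀) l atTop) :
    Tendsto (fun a => ∏ i, f a i) l atTop := by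
  refine tendsto_atTop_mono (fun a => ?_) (hi₀.atTop_mul_const (pow_pos hc (Fintype.card ι - 1)))
  rw [← Finset.mul_prod_erase _ _ (Finset.mem_univ i₀)]
  gcongr
  · exact hc.le.trans (hf a i₀)
  · calc c ^ (Fintype.card ι - 1) = ∏ _i ∈ Finset.univ.erase i₀, c := by
          rw [Finset.prod_const, Finset.card_erase_of_mem (Finset.mem_univ i₀), Finset.card_univ]
      _ ≤ ∏ i ∈ Finset.univ.erase i₀, f a i :=
          Finset.prod_le_prod (fun _ _ => hc.le) (fun i _ => hf a i)

lemma sum_pi_single_add_pi_single_mul {ι R : Type*} [Fintype ι] [DecidableEq ι]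
    [NonUnitalNonAssocSemiring R] (i j : ι) (a b : R) (g : ι → R) :
    ∑ k, (Pi.single i a + Pi.single j b : ι → R) k * g k = a * g i + b * g j := by
  simp only [Pi.add_apply, Pi.single_apply, add_mul, ite_mul, zero_mul, Finset.sum_add_distrib,
    Finset.sum_ite_eq', Finset.mem_univ, if_true]

/-- the likelihood of a `p`-component vMF mixture is unbounded. -/
theorem vmf_mixture_likelihood_unbounded
    {d n p : ℕ} (hd : 2 ≤ d) (hn : 1 ≤ n) (hp : 2 ≤ p)
    (x : Fin n → EuclideanSpace ℝ (Fin d))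
    (hx : ∀ i, x i ∈ Metric.sphere (0 : EuclideanSpace ℝ (Fin d)) 1) :
    ∃ (μ : ℕ → Fin p → EuclideanSpace ℝ (Fin d)) (κ : ℕ → Fin p → ℝ) (w : ℕ → Fin p → ℝ),
      (∀ q k, μ q k ∈ Metric.sphere (0 : EuclideanSpace ℝ (Fin d)) 1) ∧
      (∀ q k, 0 ≤ κ q k) ∧
      (∀ q k, 0 ≤ w q k) ∧
      (∀ q, ∑ k, w q k = 1) ∧
      Tendsto (fun q => ∏ i, ∑ k, w q k * vmfDensity d (μ q k) (x i) (κ q k)) atTop atTop := by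
  let i₀ : Fin n := ⟨0, hn⟩
  let k₀ : Fin p := ⟨0, by omega⟩
  let k₁ : Fin p := ⟨1, hp⟩
  have hk : k₀ ≠ k₁ := by simp [k₀, k₁, Fin.ext_iff]
  have hnorm : ∀ i, ‖x i‖ = 1 := fun i => mem_sphere_zero_iff_norm.mp (hx i)
  -- the fixed component has `κ = 1`, not the uniform `κ = 0`:
  -- `vmfConst d 0 = 0 ^ (d/2 - 1)` vanishes for `d > 2`
  refine ⟨fun _ _ => x i₀, fun q k => if k = k₀ then q else 1,
    fun _ => Pi.single k₀ (1 / 2) + Pi.single k₁ (1 / 2), fun _ _ => hx i₀,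
    fun q k => by dsimp only; split_ifs <;> positivity,
    fun q k => by simp only [Pi.add_apply, Pi.single_apply]; split_ifs <;> norm_num,
    fun q => by norm_num [Finset.sum_add_distrib], ?_⟩
  simp only [sum_pi_single_add_pi_single_mul, if_pos, if_neg hk.symm]
  refine tendsto_prod_atTop_of_forall_le (c := 1 / 2 * (vmfConst d 1 * exp (-1)))
    (by have := vmfConst_pos hd one_pos; positivity) (fun q i => ?_) i₀ ?_
  · have := vmfDensity_nonneg (μ := x i₀) (x := x i) (Nat.cast_nonneg (α := ℝ) q)
    linarith [vmfConst_mul_exp_neg_le_vmfDensity (hnorm i₀) (hnorm i) zero_le_one]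
  · simp_rw [vmfDensity_self (hnorm i₀)]
    exact (((tendsto_vmfConst_mul_exp_atTop hd).comp tendsto_natCast_atTop_atTop).const_mul_atTop
      one_half_pos).atTop_add_nonneg fun _ => by have := vmfConst_pos hd one_pos; positivity
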